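/- arXiv:1412.6085 — 5 statements merged into one kernel-verified Lean document; each statement's English description precedes it below -/
import Mathlib

section
/- Let λ₁ < μ₁ < λ₂ < ⋯ < μ_{n-1} < λₙ be 2n-1 real numbers with λ_j = -λ_{n+1-j} for all j and μ_k = -μ_{n-k} for all k. Let f(x) = ∏_{j=1}^n (x - i·λ_j) and g(x) = ∏_{j=1}^{n-1} (x - i·μ_j). Then f(x)/g(x) = x + Σ_{j=1}^{n-1} c_j/(x - i·μ_j), where each c_j is a positive real number given by c_k = -(∏_{j=1}^n (μ_k - λ_j)) / (∏_{j≠k} (μ_k - μ_j)). -/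
/-!
Both products are monic and, by the antisymmetry of the nodes, have vanishing second
coefficient, so `f - X * g` has degree `< m`. Lagrange interpolation at the `m` distinct nodes
`i μ_k` then writes `(f - X * g) / g` as `∑ f(i μ_k) / g'(i μ_k) / (X - i μ_k)`; pulling the
factor `i` out of every difference leaves `i ^ (m + 1) / i ^ (m - 1) = -1` times the real quotient
`∏ (μ_k - λ_j) / ∏ (μ_k - μ_j)`. Positivity is a sign count: by interlacing exactly `m - k` of the
`λ_j` but only `m - 1 - k` of the `μ_j` lie above `μ_k`.
-/

open Polynomial Complex Finset

theorem Fin.sum_eq_zero_of_apply_rev_eq_neg {M : Type*} [AddCommGroup M] [IsAddTorsionFree M]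
    {n : ℕ} (v : Fin n → M) (hv : ∀ i, v i = -v (Fin.rev i)) : ∑ i, v i = 0 := by
  refine self_eq_neg.mp ?_
  calc ∑ i, v i = ∑ i, -v (Fin.rev i) := sum_congr rfl fun i _ => hv i
    _ = -∑ i, v i := by
      rw [sum_neg_distrib, Fintype.sum_equiv Fin.revPerm (fun i => v (Fin.rev i)) v fun _ => rfl]

theorem Finset.prod_mul_sub_mul {ι R : Type*} [CommRing R] (s : Finset ι) (z x : R) (a : ι → R) :
    ∏ i ∈ s, (z * x - z * a i) = z ^ #s * ∏ i ∈ s, (x - a i) := by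
  simp_rw [← mul_sub, prod_mul_distrib, prod_const]

theorem Finset.prod_sub_eq_neg_one_pow_mul_prod_abs {ι K : Type*} [Field K] [LinearOrder K]
    [IsStrictOrderedRing K] (s : Finset ι) (x : K) (a : ι → K) :
    ∏ i ∈ s, (x - a i) = (-1) ^ #{i ∈ s | x < a i} * ∏ i ∈ s, |x - a i| := by
  have hsign : ∀ i, x - a i = (if x < a i then -1 else 1) * |x - a i| := fun i => by
    split_ifs with h
    · rw [abs_of_neg (sub_neg.2 h)]; ring
    · rw [abs_of_nonneg (sub_nonneg.2 (not_lt.1 h)), one_mul]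
  rw [prod_congr rfl fun i _ => hsign i, prod_mul_distrib, prod_ite, prod_const, prod_const_one,
    mul_one]

namespace Polynomial

theorem Monic.degree_sub_X_mul_lt {R : Type*} [Ring R] {f g : R[X]} (hf : f.Monic) (hg : g.Monic)
    (hdeg : f.natDegree = g.natDegree + 1) (hnext : f.nextCoeff = g.nextCoeff) :
    (f - X * g).degree < (g.natDegree : WithBot ℕ) := by
  rw [degree_lt_iff_coeff_zero]
  intro k hk
  have hk : g.natDegree ≤ k := by exact_mod_cast hk
  rw [coeff_sub]
  obtain rfl | rfl | hk :=
    show k = g.natDegree ∨ k = g.natDegree + 1 ∨ g.natDegree + 2 ≤ k by omega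
  · have hf' : f.nextCoeff = f.coeff g.natDegree := by
      rw [nextCoeff_of_natDegree_pos (by omega), hdeg, Nat.add_sub_cancel]
    rcases Nat.eq_zero_or_pos g.natDegree with h0 | hpos
    · rw [h0, coeff_X_mul_zero, ← h0, ← hf', hnext, nextCoeff, if_pos h0, sub_zero]
    · obtain ⟨t, ht⟩ : ∃ t, g.natDegree = t + 1 := ⟨_, (Nat.succ_pred_eq_of_pos hpos).symm⟩
      rw [← hf', hnext, nextCoeff_of_natDegree_pos hpos, ht, coeff_X_mul, Nat.add_sub_cancel,
        sub_self]
  · rw [coeff_X_mul, ← hdeg, hf.coeff_natDegree, hg.coeff_natDegree, sub_self]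
  · obtain ⟨t, rfl⟩ : ∃ t, k = t + 1 := ⟨k - 1, by omega⟩
    rw [coeff_X_mul, coeff_eq_zero_of_natDegree_lt (by omega),
      coeff_eq_zero_of_natDegree_lt (by omega), sub_zero]

end Polynomial

namespace Lagrange

theorem nextCoeff_nodal_univ_eq_zero {R : Type*} [CommRing R] [IsAddTorsionFree R] {n : ℕ}
    (v : Fin n → R) (hv : ∀ i, v i = -v (Fin.rev i)) : (nodal univ v).nextCoeff = 0 := by
  rw [nodal, prod_X_sub_C_nextCoeff, neg_eq_zero, Fin.sum_eq_zero_of_apply_rev_eq_neg v hv]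

variable {F ι : Type*} [Field F] [DecidableEq ι] {s : Finset ι} {v : ι → F}

theorem algebraMap_div_nodal_eq_sum (hvs : Set.InjOn v s) {p : F[X]} (hp : p.degree < #s) :
    algebraMap F[X] (RatFunc F) p / algebraMap F[X] (RatFunc F) (nodal s v) =
      ∑ i ∈ s, RatFunc.C (nodalWeight s v i * p.eval (v i)) / (RatFunc.X - RatFunc.C (v i)) := by
  conv_lhs => rw [eq_interpolate hvs hp, interpolate_apply]
  rw [map_sum, sum_div]
  refine sum_congr rfl fun i hi => ?_
  have hne : algebraMap F[X] (RatFunc F) (nodal (s.erase i) v) ≠ 0 :=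
    RatFunc.algebraMap_ne_zero nodal_ne_zero
  rw [basis_eq_prod_sub_inv_mul_nodal_div hi, ← nodal_erase_eq_nodal_div hi,
    nodal_eq_mul_nodal_erase hi, ← mul_assoc, map_mul, map_mul _ (X - C (v i)),
    mul_div_mul_right _ _ hne]
  rw [map_sub, RatFunc.algebraMap_X, RatFunc.algebraMap_C, map_mul, RatFunc.algebraMap_C,
    RatFunc.algebraMap_C, ← map_mul, mul_comm]

theorem algebraMap_div_nodal_eq_X_add_sum (hvs : Set.InjOn v s) {f : F[X]}
    (hf : (f - X * nodal s v).degree < (#s : WithBot ℕ)) :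
    algebraMap F[X] (RatFunc F) f / algebraMap F[X] (RatFunc F) (nodal s v) =
      RatFunc.X + ∑ i ∈ s, RatFunc.C (nodalWeight s v i * f.eval (v i)) /
        (RatFunc.X - RatFunc.C (v i)) := by
  have hne : algebraMap F[X] (RatFunc F) (nodal s v) ≠ 0 :=
    RatFunc.algebraMap_ne_zero nodal_ne_zero
  rw [← sub_add_cancel f (X * nodal s v), map_add, add_div, algebraMap_div_nodal_eq_sum hvs hf,
    map_mul, mul_div_cancel_right₀ _ hne, RatFunc.algebraMap_X, add_comm]
  congr 1
  refine sum_congr rfl fun i hi => ?_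
  rw [eval_sub, eval_mul, eval_nodal_at_node hi, mul_zero, sub_zero, sub_add_cancel]

end Lagrange

def StrictlyInterlaces {K : Type*} [LT K] {m : ℕ} (lam : Fin (m + 1) → K) (mu : Fin m → K) :
    Prop :=
  ∀ j : Fin m, lam j.castSucc < mu j ∧ mu j < lam j.succ

namespace StrictlyInterlaces

variable {K : Type*} [LinearOrder K] {m : ℕ} {lam : Fin (m + 1) → K} {mu : Fin m → K}

theorem strictMono_left (h : StrictlyInterlaces lam mu) : StrictMono lam :=
  Fin.strictMono_iff_lt_succ.2 fun j => (h j).1.trans (h j).2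

theorem lt_left_iff (h : StrictlyInterlaces lam mu) (k : Fin m) (j : Fin (m + 1)) :
    mu k < lam j ↔ k.castSucc < j := by
  constructor
  · intro hkj
    by_contra! hj
    exact (h.strictMono_left.monotone hj).not_gt ((h k).1.trans hkj)
  · intro hj
    exact (h k).2.trans_le (h.strictMono_left.monotone (Fin.castSucc_lt_iff_succ_le.1 hj))

theorem ne_left (h : StrictlyInterlaces lam mu) (k : Fin m) (j : Fin (m + 1)) :
    mu k ≠ lam j := by
  rcases lt_or_ge k.castSucc j with hj | hj
  · exact ((h.lt_left_iff k j).2 hj).ne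
  · exact (h.strictMono_left.monotone hj |>.trans_lt (h k).1).ne'

theorem strictMono_right (h : StrictlyInterlaces lam mu) : StrictMono mu :=
  fun k k' hk => ((h.lt_left_iff k _).2 (Fin.castSucc_lt_castSucc_iff.2 hk)).trans (h k').1

theorem neg_prod_sub_div_prod_erase_sub_pos [Field K] [IsStrictOrderedRing K]
    (h : StrictlyInterlaces lam mu) (k : Fin m) :
    0 < -(∏ j, (mu k - lam j)) / ∏ j ∈ univ.erase k, (mu k - mu j) := by
  have hmu := h.strictMono_right
  have hcard_lam : #{j | mu k < lam j} = m - k := by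
    simp_rw [h.lt_left_iff k, filter_lt_eq_Ioi, Fin.card_Ioi, Fin.val_castSucc,
      Nat.add_sub_cancel]
  have hcard_mu : #{j ∈ univ.erase k | mu k < mu j} = m - 1 - k := by
    rw [filter_erase, erase_eq_of_notMem (by simp)]
    simp_rw [hmu.lt_iff_lt, filter_lt_eq_Ioi, Fin.card_Ioi]
  have hP : 0 < ∏ j, |mu k - lam j| :=
    prod_pos fun j _ => abs_pos.2 (sub_ne_zero.2 (h.ne_left k j))
  have hQ : 0 < ∏ j ∈ univ.erase k, |mu k - mu j| :=
    prod_pos fun j hj => abs_pos.2 (sub_ne_zero.2 (hmu.injective.ne (ne_of_mem_erase hj).symm))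
  rw [prod_sub_eq_neg_one_pow_mul_prod_abs, prod_sub_eq_neg_one_pow_mul_prod_abs, hcard_lam,
    hcard_mu, show m - k = m - 1 - k + 1 by omega, pow_succ, mul_neg_one, neg_mul, neg_neg,
    mul_div_mul_left _ _ (pow_ne_zero _ (neg_ne_zero.2 one_ne_zero))]
  exact div_pos hP hQ

end StrictlyInterlaces

theorem nodalWeight_I_mul_mul_eval_nodal_I_mul {m : ℕ} (lam : Fin (m + 1) → ℝ) (mu : Fin m → ℝ)
    (k : Fin m) :
    Lagrange.nodalWeight univ (fun j => I * (mu j : ℂ)) k *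
        (Lagrange.nodal univ fun j => I * (lam j : ℂ)).eval (I * (mu k : ℂ)) =
      ((-(∏ j, (mu k - lam j)) / ∏ j ∈ univ.erase k, (mu k - mu j) : ℝ) : ℂ) := by
  obtain ⟨n, rfl⟩ : ∃ n, m = n + 1 := Nat.exists_eq_add_one_of_ne_zero k.pos.ne'
  simp only [Lagrange.nodalWeight, Lagrange.eval_nodal, prod_inv_distrib,
    prod_mul_sub_mul, card_erase_of_mem (mem_univ k), card_univ, Fintype.card_fin,
    Nat.add_sub_cancel]
  push_cast
  rw [pow_succ, pow_succ, mul_assoc _ I I, I_mul_I]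
  field_simp

theorem stmt_4_general {m : ℕ} (lam : Fin (m + 1) → ℝ) (mu : Fin m → ℝ)
    (hinter : ∀ j : Fin m, lam j.castSucc < mu j ∧ mu j < lam j.succ)
    (hlamsym : ∀ j, lam j = -lam (Fin.rev j))
    (hmusym : ∀ k, mu k = -mu (Fin.rev k))
    (c : Fin m → ℝ)
    (hc : ∀ k, c k = -(∏ j, (mu k - lam j)) / (∏ j ∈ Finset.univ.erase k, (mu k - mu j))) :
    (∀ k, 0 < c k) ∧
    (algebraMap (Polynomial ℂ) (RatFunc ℂ) (∏ j, (X - C (Complex.I * (lam j : ℂ))))) /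
      (algebraMap (Polynomial ℂ) (RatFunc ℂ) (∏ j, (X - C (Complex.I * (mu j : ℂ)))))
    = RatFunc.X + ∑ k, RatFunc.C ((c k : ℂ)) / (RatFunc.X - RatFunc.C (Complex.I * (mu k : ℂ))) := by
  have hinterlaces : StrictlyInterlaces lam mu := hinter
  refine ⟨fun k => hc k ▸ hinterlaces.neg_prod_sub_div_prod_erase_sub_pos k, ?_⟩
  have hinj : Set.InjOn (fun k => I * (mu k : ℂ)) (univ : Finset (Fin m)) :=
    fun a _ b _ h => hinterlaces.strictMono_right.injective
      (ofReal_injective (mul_left_cancel₀ I_ne_zero h))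
  have hsymm : ∀ {n : ℕ} (a : Fin n → ℝ), (∀ j, a j = -a (Fin.rev j)) →
      ∀ j, I * (a j : ℂ) = -(I * (a (Fin.rev j) : ℂ)) :=
    fun a ha j => by rw [ha j]; push_cast; ring
  have hdeg : ((Lagrange.nodal univ fun j => I * (lam j : ℂ)) -
      X * Lagrange.nodal univ fun j => I * (mu j : ℂ)).degree <
        (#(univ : Finset (Fin m)) : WithBot ℕ) := by
    rw [← Lagrange.natDegree_nodal (v := fun j => I * (mu j : ℂ))]
    refine Monic.degree_sub_X_mul_lt Lagrange.nodal_monic Lagrange.nodal_monic ?_ ?_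
    · simp [Lagrange.natDegree_nodal]
    · rw [Lagrange.nextCoeff_nodal_univ_eq_zero _ (hsymm lam hlamsym),
        Lagrange.nextCoeff_nodal_univ_eq_zero _ (hsymm mu hmusym)]
  rw [← Lagrange.nodal_eq, ← Lagrange.nodal_eq,
    Lagrange.algebraMap_div_nodal_eq_X_add_sum hinj hdeg]
  congr 1
  refine sum_congr rfl fun k _ => ?_
  rw [nodalWeight_I_mul_mul_eval_nodal_I_mul, hc]

/-- Partial fraction decomposition: with symmetric strictly interlacing data,
`f(x)/g(x) = x + Σ_j c_j/(x - i μ_j)` where each residue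
`c_k = -(∏_j (μ_k - λ_j)) / (∏_{j≠k} (μ_k - μ_j))` is a positive real number. -/
theorem stmt_4 {m : ℕ} (hm : 1 ≤ m) (lam : Fin (m + 1) → ℝ) (mu : Fin m → ℝ)
    (hinter : ∀ j : Fin m, lam j.castSucc < mu j ∧ mu j < lam j.succ)
    (hlamsym : ∀ j, lam j = -lam (Fin.rev j))
    (hmusym : ∀ k, mu k = -mu (Fin.rev k))
    (c : Fin m → ℝ)
    (hc : ∀ k, c k = -(∏ j, (mu k - lam j)) / (∏ j ∈ Finset.univ.erase k, (mu k - mu j))) :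
    (∀ k, 0 < c k) ∧
    (algebraMap (Polynomial ℂ) (RatFunc ℂ) (∏ j, (X - C (Complex.I * (lam j : ℂ))))) /
      (algebraMap (Polynomial ℂ) (RatFunc ℂ) (∏ j, (X - C (Complex.I * (mu j : ℂ)))))
    = RatFunc.X + ∑ k, RatFunc.C ((c k : ℂ)) / (RatFunc.X - RatFunc.C (Complex.I * (mu k : ℂ))) :=
  stmt_4_general lam mu hinter hlamsym hmusym c hc
end

section
/- Let T be a tree on vertices 1,…,n, v a vertex of T, and A a real skew-symmetric matrix with graph T. Then C_A(x)/C_{A(v)}(x) = x + Σ_{j ∈ N(v)} a_{vj}² · C_{A_{j'}(v)}(x)/C_{A_j(v)}(x), where the sum is over neighbors j of v. -/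
/-!
Write `W = xI - A` over `ℝ(x)` and take the Schur complement of the entry at `v`:
`det W = det W(v) · (x - Σ_{j,k} W_{vj} (W(v)⁻¹)_{jk} W_{kv})`. Only neighbours `j, k` of `v`
contribute. The matrix `W(v)` is block diagonal along the components of `T - v`, hence so is
its inverse; distinct neighbours of `v` lie in distinct components because `T` is acyclic, so
only the diagonal terms `j = k` survive, and by Cramer's rule `(W(v)⁻¹)_{jj}` is the quotient of
the principal minors of `W` on `T_j(v) - j` and on `T_j(v)`. Skew-symmetry turns
`W_{vj} W_{jv} = a_{vj} a_{jv}` into `-a_{vj}²`.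
-/

open Polynomial Matrix Finset
open scoped Classical

noncomputable section

/-- The principal submatrix of `A` on the index set `S`. -/
def subOn {N : ℕ} (A : Matrix (Fin N) (Fin N) ℝ) (S : Finset (Fin N)) :
    Matrix {x // x ∈ S} {x // x ∈ S} ℝ :=
  A.submatrix (fun x => x.1) (fun x => x.1)

/-- The vertex set of the connected component of `v` in the subgraph of `G`
induced on `S`. -/
def comp {N : ℕ} (G : SimpleGraph (Fin N)) (S : Finset (Fin N)) (v : Fin N) :
    Finset (Fin N) :=
  S.filter (fun u => ∃ w : G.Walk v u, ∀ x ∈ w.support, x ∈ S)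

namespace Matrix

variable {n α R K : Type*}

theorem submatrix_sumCompl_eq_fromBlocks (M : Matrix n n R) (p : n → Prop) [DecidablePred p] :
    M.submatrix (Equiv.sumCompl p) (Equiv.sumCompl p) =
      fromBlocks (toSquareBlockProp M p) (toBlock M p (¬p ·)) (toBlock M (¬p ·) p)
        (toSquareBlockProp M (¬p ·)) := by
  ext (i | i) (j | j) <;> rfl

def principalMinor [DecidableEq n] [CommRing R] (M : Matrix n n R) (S : Finset n) : R :=
  (M.submatrix ((↑) : S → n) (↑)).det

theorem det_submatrix_eq_principalMinor [DecidableEq n] [CommRing R] [Fintype α] [DecidableEq α]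
    (M : Matrix n n R) {S : Finset n} {f : α → n} (hf : f.Injective) (hS : Set.range f = S) :
    (M.submatrix f f).det = M.principalMinor S := by
  rw [principalMinor,
    ← det_submatrix_equiv_self ((Equiv.ofInjective f hf).trans (Equiv.setCongr hS))]
  rfl

theorem charmatrix_submatrix [Fintype n] [DecidableEq n] [Fintype α] [DecidableEq α] [CommRing R]
    (M : Matrix n n R) {f : α → n} (hf : f.Injective) :
    charmatrix (M.submatrix f f) = (charmatrix M).submatrix f f := by
  ext i j
  by_cases h : i = j
  · simp [h]
  · simp [charmatrix_apply_ne _ _ _ h, charmatrix_apply_ne _ _ _ (hf.ne h)]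

theorem map_charpoly_submatrix [Fintype n] [DecidableEq n] [Fintype α] [DecidableEq α]
    [CommRing R] {S : Type*} [CommRing S] (φ : R[X] →+* S) (M : Matrix n n R) {f : α → n}
    (hf : f.Injective) :
    φ (M.submatrix f f).charpoly = (((charmatrix M).map φ).submatrix f f).det := by
  rw [charpoly, charmatrix_submatrix M hf, RingHom.map_det]
  rfl

theorem inv_apply_self_eq_det_div [Fintype n] [DecidableEq n] [Field K] (M : Matrix n n K)
    (i : n) : M⁻¹ i i = (toSquareBlockProp M (· ≠ i)).det / M.det := by
  have hrow : (M.updateRow i (Pi.single i 1)).det = (toSquareBlockProp M (· ≠ i)).det := by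
    have : Subsingleton {j // ¬j ≠ i} := ⟨fun a b => Subtype.ext (by grind)⟩
    rw [twoBlockTriangular_det _ (· ≠ i) fun j hj k hk => by simp [not_not.mp hj, hk],
      det_eq_elem_of_subsingleton (toSquareBlockProp _ (¬· ≠ i)) ⟨i, by simp⟩]
    have : toSquareBlockProp (M.updateRow i (Pi.single i 1)) (· ≠ i) =
        toSquareBlockProp M (· ≠ i) := by
      ext j k
      simp [toSquareBlockProp, updateRow_ne j.2]
    rw [this]
    simp [toSquareBlockProp]
  rw [inv_def, smul_apply, adjugate_apply, hrow, Ring.inverse_eq_inv', smul_eq_mul,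
    div_eq_inv_mul]

theorem toSquareBlockProp_inv_of_decoupled [Fintype n] [DecidableEq n] [Field K]
    (M : Matrix n n K) (p : n → Prop) [DecidablePred p]
    (h₁ : ∀ i, p i → ∀ j, ¬p j → M i j = 0) (h₂ : ∀ i, ¬p i → ∀ j, p j → M i j = 0)
    (hM : M.det ≠ 0) :
    toSquareBlockProp M⁻¹ p = (toSquareBlockProp M p)⁻¹ ∧ toBlock M⁻¹ p (¬p ·) = 0 := by
  set A := toSquareBlockProp M p
  set D := toSquareBlockProp M (¬p ·)
  have hAD : M.det = A.det * D.det := twoBlockTriangular_det M p h₂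
  have hA : IsUnit A := (isUnit_iff_isUnit_det A).2 (left_ne_zero_of_mul (hAD ▸ hM)).isUnit
  have hD : IsUnit D := (isUnit_iff_isUnit_det D).2 (right_ne_zero_of_mul (hAD ▸ hM)).isUnit
  have hB : toBlock M p (¬p ·) = 0 := by ext i j; exact h₁ i i.2 j j.2
  have hC : toBlock M (¬p ·) p = 0 := by ext i j; exact h₂ i i.2 j j.2
  have key : M⁻¹.submatrix (Equiv.sumCompl p) (Equiv.sumCompl p) = fromBlocks A⁻¹ 0 0 D⁻¹ := by
    rw [← inv_submatrix_equiv, submatrix_sumCompl_eq_fromBlocks, hB, hC,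
      inv_fromBlocks_zero₁₂_of_isUnit_iff _ _ _ (iff_of_true hA hD)]
    simp
  exact ⟨congrArg toBlocks₁₁ key, congrArg toBlocks₁₂ key⟩

theorem det_eq_det_toSquareBlockProp_ne_mul [Fintype n] [DecidableEq n] [Field K]
    (M : Matrix n n K) (v : n) (hv : (toSquareBlockProp M (· ≠ v)).det ≠ 0) :
    M.det = (toSquareBlockProp M (· ≠ v)).det *
      (M v v - ∑ j : {j // j ≠ v}, ∑ k : {k // k ≠ v},
        M v j * (toSquareBlockProp M (· ≠ v))⁻¹ j k * M k v) := by
  set D := toSquareBlockProp M (· ≠ v)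
  have : Invertible D := D.invertibleOfIsUnitDet hv.isUnit
  rw [← det_submatrix_equiv_self (Equiv.sumCompl (· = v)), submatrix_sumCompl_eq_fromBlocks,
    det_fromBlocks₂₂, det_eq_elem_of_subsingleton (_ - _) ⟨v, rfl⟩, invOf_eq_nonsing_inv]
  simp only [D, sub_apply, mul_apply, Finset.sum_mul, toSquareBlockProp, toBlock_apply]
  rw [Finset.sum_comm]

end Matrix

section Components

variable {N : ℕ} {G : SimpleGraph (Fin N)} {S : Finset (Fin N)} {u v w : Fin N}

theorem mem_comp_self (hv : v ∈ S) : v ∈ comp G S v :=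
  mem_filter.2 ⟨hv, .nil, by simpa using hv⟩

theorem mem_comp_of_adj (hu : u ∈ comp G S w) (huv : G.Adj u v) (hv : v ∈ S) :
    v ∈ comp G S w := by
  obtain ⟨-, p, hp⟩ := mem_filter.1 hu
  refine mem_filter.2 ⟨hv, p.concat huv, fun x hx => ?_⟩
  rw [SimpleGraph.Walk.support_concat, List.mem_append, List.mem_singleton] at hx
  exact hx.elim (hp x) (· ▸ hv)

theorem notMem_comp_erase_of_adj (hG : G.IsAcyclic) (hu : G.Adj v u) (hw : G.Adj v w)
    (huw : u ≠ w) : w ∉ comp G (univ.erase v) u := by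
  intro hmem
  obtain ⟨-, p, hp⟩ := mem_filter.1 hmem
  have hpath : (SimpleGraph.Walk.cons hu.symm (.cons hw .nil) : G.Walk u w).IsPath := by
    simp [hu.ne', huw, hw.ne]
  have hq : p.toPath = ⟨_, hpath⟩ := (hG.subsingleton_path u w).elim _ _
  have hv : v ∈ (p.toPath : G.Walk u w).support := by simp [hq]
  simpa using hp v (p.support_toPath_subset_support hv)

end Components

section ForestMinors

variable {N : ℕ} {K : Type*} [Field K] {G : SimpleGraph (Fin N)} {M : Matrix (Fin N) (Fin N) K}

theorem apply_eq_zero_of_mem_comp_of_notMem (hM : ∀ i j, i ≠ j → M i j ≠ 0 → G.Adj i j)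
    {S : Finset (Fin N)} {w a b : Fin N} (ha : a ∈ comp G S w) (hb : b ∈ S)
    (hb' : b ∉ comp G S w) : M a b = 0 ∧ M b a = 0 := by
  have hab : a ≠ b := fun h => hb' (h ▸ ha)
  have hadj : ¬G.Adj a b := fun h => hb' (mem_comp_of_adj ha h hb)
  exact ⟨not_not.1 fun h => hadj (hM a b hab h), not_not.1 fun h => hadj (hM b a hab.symm h).symm⟩

theorem toSquareBlockProp_inv_toSquareBlockProp_ne_comp
    (hM : ∀ i j, i ≠ j → M i j ≠ 0 → G.Adj i j) {v : Fin N}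
    (hv : (M.toSquareBlockProp (· ≠ v)).det ≠ 0) (j : Fin N) :
    toSquareBlockProp (M.toSquareBlockProp (· ≠ v))⁻¹ (·.1 ∈ comp G (univ.erase v) j) =
        (toSquareBlockProp (M.toSquareBlockProp (· ≠ v)) (·.1 ∈ comp G (univ.erase v) j))⁻¹ ∧
      toBlock (M.toSquareBlockProp (· ≠ v))⁻¹ (·.1 ∈ comp G (univ.erase v) j)
        (¬·.1 ∈ comp G (univ.erase v) j) = 0 :=
  toSquareBlockProp_inv_of_decoupled _ _
    (fun a ha b hb => (apply_eq_zero_of_mem_comp_of_notMem hM ha (by simpa using b.2) hb).1)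
    (fun a ha b hb => (apply_eq_zero_of_mem_comp_of_notMem hM hb (by simpa using a.2) ha).2) hv

theorem inv_toSquareBlockProp_ne_apply_self (hM : ∀ i j, i ≠ j → M i j ≠ 0 → G.Adj i j)
    {v : Fin N} (hv : (M.toSquareBlockProp (· ≠ v)).det ≠ 0) (j : {x // x ≠ v}) :
    (M.toSquareBlockProp (· ≠ v))⁻¹ j j =
      M.principalMinor ((comp G (univ.erase v) j).erase j) /
        M.principalMinor (comp G (univ.erase v) j) := by
  set C := comp G (univ.erase v) j
  have hCne : ∀ x ∈ C, x ≠ v := fun x hx => (mem_erase.1 (filter_subset _ _ hx)).1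
  have hj : j.1 ∈ C := mem_comp_self (by simpa using j.2)
  have h := congrFun (congrFun (toSquareBlockProp_inv_toSquareBlockProp_ne_comp hM hv j).1
    ⟨j, hj⟩) ⟨j, hj⟩
  rw [toSquareBlockProp, toBlock_apply] at h
  rw [h, inv_apply_self_eq_det_div]
  congr 1
  · refine det_submatrix_eq_principalMinor M
      (f := fun z : {z : {y : {x // x ≠ v} // y.1 ∈ C} // z ≠ ⟨j, hj⟩} => z.1.1.1)
      (Subtype.val_injective.comp (Subtype.val_injective.comp Subtype.val_injective)) ?_
    ext x
    rw [coe_erase, Set.mem_sdiff, mem_coe, Set.mem_singleton_iff]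
    constructor
    · rintro ⟨⟨⟨⟨y, hyv⟩, hyC⟩, hy⟩, rfl⟩
      exact ⟨hyC, fun h => hy (Subtype.ext (Subtype.ext h))⟩
    · rintro ⟨hx, hxj⟩
      exact ⟨⟨⟨⟨x, hCne x hx⟩, hx⟩, fun h => hxj (congrArg (·.1.1) h)⟩, rfl⟩
  · refine det_submatrix_eq_principalMinor M
      (f := fun z : {y : {x // x ≠ v} // y.1 ∈ C} => z.1.1)
      (Subtype.val_injective.comp Subtype.val_injective) ?_
    ext x
    simpa using hCne x

theorem inv_toSquareBlockProp_ne_apply_eq_zero (hM : ∀ i j, i ≠ j → M i j ≠ 0 → G.Adj i j)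
    {v : Fin N} (hv : (M.toSquareBlockProp (· ≠ v)).det ≠ 0) {j k : {x // x ≠ v}}
    (hk : k.1 ∉ comp G (univ.erase v) j) : (M.toSquareBlockProp (· ≠ v))⁻¹ j k = 0 :=
  congrFun (congrFun (toSquareBlockProp_inv_toSquareBlockProp_ne_comp hM hv j).2
    ⟨j, mem_comp_self (by simpa using j.2)⟩) ⟨k, hk⟩

theorem det_eq_principalMinor_erase_mul_of_isAcyclic (hG : G.IsAcyclic)
    (hM : ∀ i j, i ≠ j → M i j ≠ 0 → G.Adj i j) (v : Fin N)
    (hv : M.principalMinor (univ.erase v) ≠ 0) :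
    M.det = M.principalMinor (univ.erase v) *
      (M v v - ∑ j ∈ univ.filter (G.Adj v), M v j * M j v *
        (M.principalMinor ((comp G (univ.erase v) j).erase j) /
          M.principalMinor (comp G (univ.erase v) j))) := by
  rw [← det_submatrix_eq_principalMinor M (f := fun x : {x // x ≠ v} => x.1)
    Subtype.val_injective (by ext; simp)] at hv ⊢
  have hM_nonadj : ∀ j : {x // x ≠ v}, ¬G.Adj v j → M v j = 0 := fun j hj =>
    not_not.1 fun h => hj (hM v j j.2.symm h)
  have hoff : ∀ j k : {x // x ≠ v}, j ≠ k →
      M v j * (M.toSquareBlockProp (· ≠ v))⁻¹ j k * M k v = 0 := by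
    intro j k hjk
    by_cases hj : G.Adj v j
    · by_cases hk : G.Adj v k
      · rw [inv_toSquareBlockProp_ne_apply_eq_zero hM hv
          (notMem_comp_erase_of_adj hG hj hk (Subtype.coe_ne_coe.2 hjk)), mul_zero, zero_mul]
      · rw [not_not.1 fun h => hk (hM k v k.2 h).symm, mul_zero]
    · rw [hM_nonadj j hj, zero_mul, zero_mul]
  set g : Fin N → K := fun x => if G.Adj v x then M v x * M x v *
    (M.principalMinor ((comp G (univ.erase v) x).erase x) /
      M.principalMinor (comp G (univ.erase v) x)) else 0
  have hdiag : ∀ j : {x // x ≠ v},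
      M v j * (M.toSquareBlockProp (· ≠ v))⁻¹ j j * M j v = g j := by
    intro j
    by_cases hj : G.Adj v j
    · rw [inv_toSquareBlockProp_ne_apply_self hM hv j]
      simp only [g, if_pos hj]
      ring
    · simp [g, hj, hM_nonadj j hj]
  rw [det_eq_det_toSquareBlockProp_ne_mul M v hv]
  congr 2
  calc ∑ j : {x // x ≠ v}, ∑ k : {x // x ≠ v},
        M v j * (M.toSquareBlockProp (· ≠ v))⁻¹ j k * M k v
      = ∑ j : {x // x ≠ v}, g j :=
        sum_congr rfl fun j _ => (sum_eq_single j (fun k _ hkj => hoff j k hkj.symm)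
          (by simp)).trans (hdiag j)
    _ = ∑ x ∈ univ.erase v, g x := (sum_subtype _ (by simp) g).symm
    _ = ∑ x, g x := sum_erase _ (by simp [g])
    _ = _ := by rw [sum_filter]

end ForestMinors

/-- For a real skew-symmetric matrix `A` whose graph is a tree `T` and a vertex
`v`, `C_A(x)/C_{A(v)}(x) = x + Σ_{j ∈ N(v)} a_{vj}² C_{A_{j'}(v)}(x)/C_{A_j(v)}(x)`. -/
theorem stmt_6 {N : ℕ} (T : SimpleGraph (Fin N)) (hT : T.IsTree)
    (A : Matrix (Fin N) (Fin N) ℝ) (hskew : Aᵀ = -A)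
    (hgraph : ∀ i j, i ≠ j → (A i j ≠ 0 ↔ T.Adj i j)) (v : Fin N) :
    (algebraMap (Polynomial ℝ) (RatFunc ℝ) (Matrix.charpoly A)) /
        (algebraMap (Polynomial ℝ) (RatFunc ℝ)
          (Matrix.charpoly (subOn A (Finset.univ.erase v))))
      = RatFunc.X + ∑ j ∈ Finset.univ.filter (fun j => T.Adj v j),
          RatFunc.C (A v j ^ 2) *
            ((algebraMap (Polynomial ℝ) (RatFunc ℝ)
                (Matrix.charpoly (subOn A ((comp T (Finset.univ.erase v) j).erase j)))) /
              (algebraMap (Polynomial ℝ) (RatFunc ℝ)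
                (Matrix.charpoly (subOn A (comp T (Finset.univ.erase v) j))))) := by
  set φ := algebraMap ℝ[X] (RatFunc ℝ)
  set W := (charmatrix A).map φ
  have hminor : ∀ S : Finset (Fin N), φ (subOn A S).charpoly = W.principalMinor S :=
    fun S => map_charpoly_submatrix φ A Subtype.val_injective
  have hminor_ne : ∀ S : Finset (Fin N), W.principalMinor S ≠ 0 := fun S => by
    rw [← hminor, map_ne_zero_iff _ (RatFunc.algebraMap_injective ℝ)]
    exact (charpoly_monic _).ne_zero
  have hA_swap : ∀ i j, A j i = -A i j := fun i j => by
    simpa using congrFun (congrFun hskew i) j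
  have hW : ∀ i j, i ≠ j → W i j = -RatFunc.C (A i j) := fun i j hij => by
    simp [W, φ, charmatrix_apply_ne _ _ _ hij, RatFunc.algebraMap_C]
  have hWvv : W v v = RatFunc.X := by
    have : A v v = 0 := by linarith [hA_swap v v]
    simp [W, φ, this, RatFunc.algebraMap_X]
  have hWgraph : ∀ i j, i ≠ j → W i j ≠ 0 → T.Adj i j := fun i j hij h =>
    (hgraph i j hij).1 fun ha => h (by simp [hW i j hij, ha])
  rw [show φ A.charpoly = W.det from RingHom.map_det φ (charmatrix A),
    det_eq_principalMinor_erase_mul_of_isAcyclic hT.isAcyclic hWgraph v (hminor_ne _), hminor,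
    mul_div_cancel_left₀ _ (hminor_ne _), hWvv, sub_eq_add_neg, ← sum_neg_distrib]
  refine congrArg _ (sum_congr rfl fun j hj => ?_)
  have hvj : v ≠ j := (mem_filter.1 hj).2.ne
  rw [hW v j hvj, hW j v hvj.symm, hA_swap, hminor, hminor]
  simp only [map_neg, map_pow]
  ring
end
end

section
/- Let A be an n×n real skew-symmetric matrix and v an index such that the principal submatrix A(v) has 0 as an eigenvalue of multiplicity at least 2. Then 0 is an eigenvalue of A, and hence the eigenvalues of A(v) do not strictly interlace those of A. -/
/-! For a real skew-symmetric `B`, `B²x = 0` forces `Bx = 0` because `‖Bx‖² = -⟪x, B²x⟫`, so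
the algebraic multiplicity of the eigenvalue `0` of `B = A(v)` equals `dim ker B ≥ 2`. Some
nonzero `x ∈ ker B` is then also orthogonal to row `v` of `A`, and inserting a `0` at position
`v` turns it into a nonzero vector of `ker A`. Strict interlacing, on the other hand, forces the
`μⱼ` to be strictly increasing, so `0` could be at most a simple eigenvalue of `B`. -/

open Polynomial Matrix

namespace Module.End

variable {K V : Type*} [Field K] [AddCommGroup V] [Module K V]

theorem maxGenEigenspace_zero_eq_ker_of_ker_sq_le {f : End K V}
    (hf : ∀ x, f (f x) = 0 → f x = 0) : f.maxGenEigenspace 0 = LinearMap.ker f := by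
  have hsq : LinearMap.ker (f ^ 1) = LinearMap.ker (f ^ (1 + 1)) :=
    le_antisymm (LinearMap.ker_le_ker_comp _ _) fun x hx => by
      simpa using hf x (by simpa [pow_two] using hx)
  refine le_antisymm (fun x hx => ?_) (eigenspace_zero f ▸ eigenspace_le_maxGenEigenspace ..)
  obtain ⟨k, hk⟩ := (f.mem_maxGenEigenspace 0 x).mp hx
  have : x ∈ LinearMap.ker (f ^ (1 + k)) := by
    simpa [pow_add] using congrArg f hk
  simpa [← ker_pow_constant hsq k] using this

end Module.End

namespace Matrix

section SkewSymmetric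

variable {m : Type*} [Fintype m]

theorem mulVec_eq_zero_of_mulVec_mulVec_eq_zero {R : Type*} [CommRing R] [LinearOrder R]
    [IsStrictOrderedRing R] {B : Matrix m m R} (hB : Bᵀ = -B) {x : m → R}
    (hx : B *ᵥ (B *ᵥ x) = 0) : B *ᵥ x = 0 := by
  refine dotProduct_self_eq_zero.mp ?_
  calc (B *ᵥ x) ⬝ᵥ (B *ᵥ x) = -(x ⬝ᵥ B *ᵥ (B *ᵥ x)) := by
        rw [← vecMul_transpose, ← dotProduct_mulVec, hB, neg_mulVec, dotProduct_neg]
    _ = 0 := by rw [hx, dotProduct_zero, neg_zero]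

theorem rootMultiplicity_charpoly_zero_eq_finrank_ker {K : Type*} [Field K] [LinearOrder K]
    [IsStrictOrderedRing K] [DecidableEq m] {B : Matrix m m K} (hB : Bᵀ = -B) :
    B.charpoly.rootMultiplicity 0 = Module.finrank K (LinearMap.ker (toLin' B)) := by
  rw [← charpoly_toLin', ← LinearMap.finrank_maxGenEigenspace_eq,
    Module.End.maxGenEigenspace_zero_eq_ker_of_ker_sq_le fun x => ?_]
  simpa using mulVec_eq_zero_of_mulVec_mulVec_eq_zero hB (x := x)

end SkewSymmetric

theorem mulVec_insertNth_zero {R : Type*} [NonUnitalNonAssocSemiring R] {m : Type*} {n : ℕ}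
    (A : Matrix m (Fin (n + 1)) R) (v : Fin (n + 1)) (x : Fin n → R) :
    A *ᵥ v.insertNth 0 x = A.submatrix id v.succAbove *ᵥ x := by
  ext i
  simp [mulVec, dotProduct, Fin.sum_univ_succAbove _ v]

theorem ker_toLin'_ne_bot_of_two_le_finrank_ker_submatrix {K : Type*} [Field K] {n : ℕ}
    {A : Matrix (Fin (n + 1)) (Fin (n + 1)) K} {v : Fin (n + 1)}
    (h : 2 ≤ Module.finrank K (LinearMap.ker (toLin' (A.submatrix v.succAbove v.succAbove)))) :
    LinearMap.ker (toLin' A) ≠ ⊥ := by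
  set W := LinearMap.ker (toLin' (A.submatrix v.succAbove v.succAbove))
  let rowV : W →ₗ[K] K :=
    LinearMap.proj v ∘ₗ toLin' (A.submatrix id v.succAbove) ∘ₗ W.subtype
  obtain ⟨y, hy, hy0⟩ := Submodule.ne_bot_iff _ |>.mp <|
    LinearMap.ker_ne_bot_of_finrank_lt (f := rowV) (by rw [Module.finrank_self]; omega)
  refine Submodule.ne_bot_iff _ |>.mpr ⟨v.insertNth 0 y, ?_, ?_⟩
  · rw [LinearMap.mem_ker, toLin'_apply, mulVec_insertNth_zero]
    ext i
    induction i using Fin.succAboveCases v with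
    | x => exact hy
    | p j => exact congrFun y.2 j
  · exact fun h => hy0 <| Subtype.ext <| funext fun j => by
      simpa using congrFun h (v.succAbove j)

end Matrix

theorem Fin.strictMono_of_interlace {α : Type*} [Preorder α] {n : ℕ} {lam : Fin (n + 1) → α}
    {mu : Fin n → α} (h : ∀ j, lam j.castSucc < mu j ∧ mu j < lam j.succ) : StrictMono mu := by
  have hlam : StrictMono lam := Fin.strictMono_iff_lt_succ.2 fun j => (h j).1.trans (h j).2
  intro i j hij
  calc mu i < lam i.succ := (h i).2
    _ ≤ lam j.castSucc := hlam.monotone (Fin.succ_le_castSucc_iff.mpr hij)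
    _ < mu j := (h j).1

theorem Polynomial.rootMultiplicity_prod_X_sub_C_le_one {R ι : Type*} [CommRing R] [IsDomain R]
    [Fintype ι] {c : ι → R} (hc : Function.Injective c) (a : R) :
    (∏ j, (X - C (c j))).rootMultiplicity a ≤ 1 := by
  classical
  rw [← count_roots, ← Finset.prod_image (fun i _ j _ h => hc h) (f := fun b => X - C b),
    roots_prod_X_sub_C]
  exact Multiset.nodup_iff_count_le_one.mp (Finset.nodup _) a

/-- If the principal submatrix `A(v)` of a real skew-symmetric matrix `A` has
`0` as an eigenvalue of multiplicity at least `2`, then `0` is an eigenvalue of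
`A`, and the eigenvalues of `A(v)` do not strictly interlace those of `A`. -/
theorem stmt_9 {n : ℕ} (A : Matrix (Fin (n + 1)) (Fin (n + 1)) ℝ) (hskew : Aᵀ = -A)
    (v : Fin (n + 1)) (B : Matrix (Fin n) (Fin n) ℝ)
    (hB : B = A.submatrix v.succAbove v.succAbove)
    (hmult : 2 ≤ (Matrix.charpoly B).rootMultiplicity 0) :
    (Matrix.charpoly A).IsRoot 0 ∧
    ¬ ∃ (lam : Fin (n + 1) → ℝ) (mu : Fin n → ℝ),
        (A.map (Complex.ofReal : ℝ → ℂ)).charpoly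
            = ∏ j, (X - C (Complex.I * (lam j : ℂ))) ∧
        (B.map (Complex.ofReal : ℝ → ℂ)).charpoly
            = ∏ j, (X - C (Complex.I * (mu j : ℂ))) ∧
        ∀ j : Fin n, lam j.castSucc < mu j ∧ mu j < lam j.succ := by
  have hBskew : Bᵀ = -B := by rw [hB, transpose_submatrix, hskew]; rfl
  have hker : LinearMap.ker (toLin' A) ≠ ⊥ :=
    ker_toLin'_ne_bot_of_two_le_finrank_ker_submatrix <|
      hB ▸ rootMultiplicity_charpoly_zero_eq_finrank_ker hBskew ▸ hmult
  have hzero : Module.End.HasEigenvalue (toLin' A) 0 := by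
    rwa [Module.End.hasEigenvalue_iff, Module.End.eigenspace_zero]
  refine ⟨charpoly_toLin' A ▸ (Module.End.hasEigenvalue_iff_isRoot_charpoly _ 0).mp hzero, ?_⟩
  rintro ⟨lam, mu, -, hBc, hlt⟩
  have hinj : Function.Injective fun j => Complex.I * (mu j : ℂ) := fun i j hij =>
    (Fin.strictMono_of_interlace hlt).injective <|
      Complex.ofReal_injective <| mul_left_cancel₀ Complex.I_ne_zero hij
  have hmultC : B.charpoly.rootMultiplicity 0 ≤ 1 := by
    rw [eq_rootMultiplicity_map (f := Complex.ofRealHom) Complex.ofReal_injective, map_zero,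
      ← charpoly_map]
    exact (congrArg (rootMultiplicity 0) hBc).trans_le
      (rootMultiplicity_prod_X_sub_C_le_one hinj 0)
  omega
end

section
/- If a tree T of order n is NEB at some vertex, then the matching number of T equals ⌊n/2⌋. -/
open Polynomial Matrix Finset
open scoped Classical

noncomputable section

/-- The graph of a square real matrix: `i ~ j` iff `i ≠ j` and the `(i,j)` or
`(j,i)` entry is nonzero. -/
def graphOf {N : ℕ} (A : Matrix (Fin N) (Fin N) ℝ) : SimpleGraph (Fin N) :=
  SimpleGraph.fromRel (fun i j => A i j ≠ 0)

/-- The eigenvalues of the real skew-symmetric matrix `A` are `i·l 0, …`,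
expressed via the characteristic polynomial over `ℂ`. -/
def specIm {m : Type} [Fintype m] [DecidableEq m] (A : Matrix m m ℝ)
    (l : Fin (Fintype.card m) → ℝ) : Prop :=
  (A.map (Complex.ofReal : ℝ → ℂ)).charpoly = ∏ j, (X - C (Complex.I * (l j : ℂ)))

/-- The (purely imaginary) spectrum of `B` strictly interlaces that of `A`,
in the ordering `i·a ≤ i·b ↔ a ≤ b`. -/
def StrictInterlace {m m' : Type} [Fintype m] [DecidableEq m] [Fintype m'] [DecidableEq m']
    (A : Matrix m m ℝ) (B : Matrix m' m' ℝ) : Prop :=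
  ∃ (h : Fintype.card m' + 1 = Fintype.card m) (l : Fin (Fintype.card m) → ℝ)
    (mu : Fin (Fintype.card m') → ℝ),
    specIm A l ∧ specIm B mu ∧
      ∀ j : Fin (Fintype.card m'),
        l (Fin.cast h j.castSucc) < mu j ∧ mu j < l (Fin.cast h j.succ)

/-- Fuel-based recursion for the Duarte property of the principal submatrix of
`A` on `S` with respect to the vertex `w ∈ S`. -/
def DuarteAux {N : ℕ} (A : Matrix (Fin N) (Fin N) ℝ) :
    ℕ → Finset (Fin N) → Fin N → Prop
  | 0, S, w => S = {w}
  | (k + 1), S, w => S = {w} ∨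
      (StrictInterlace (subOn A S) (subOn A (S.erase w)) ∧
        ∀ v ∈ S.erase w, (graphOf A).Adj w v →
          DuarteAux A k (comp (graphOf A) (S.erase w) v) v)

/-- `A` has the Duarte property with respect to the vertex `w`. -/
def Duarte {N : ℕ} (A : Matrix (Fin N) (Fin N) ℝ) (w : Fin N) : Prop :=
  DuarteAux A N Finset.univ w

/-- Fuel-based recursion for the nearly even branching (NEB) property of the
subtree of `T` on `S` at the vertex `w ∈ S`. -/
def NEBAux {N : ℕ} (T : SimpleGraph (Fin N)) : ℕ → Finset (Fin N) → Fin N → Prop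
  | 0, S, w => S = {w}
  | (k + 1), S, w => S = {w} ∨
      ((((S.erase w).filter
            (fun v => T.Adj w v ∧ Odd (comp T (S.erase w) v).card)).card
          = if Even S.card then 1 else 0) ∧
        ∀ v ∈ S.erase w, T.Adj w v → NEBAux T k (comp T (S.erase w) v) v)

/-- The tree `T` is nearly even branching (NEB) at the vertex `w`. -/
def NEB {N : ℕ} (T : SimpleGraph (Fin N)) (w : Fin N) : Prop :=
  NEBAux T N Finset.univ w

/-- The matching number of a finite graph: the largest `k` such that some
matching covers `2k` vertices. -/
def matchingNumber {V : Type} [Fintype V] (G : SimpleGraph V) : ℕ :=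
  sSup {k | ∃ M : G.Subgraph, M.IsMatching ∧ M.verts.ncard = 2 * k}


section AuxProofs
open SimpleGraph in
lemma sup_matching {V : Type} {G : SimpleGraph V} {ι : Type} (s : Finset ι)
    (f : ι → G.Subgraph)
    (hm : ∀ i ∈ s, (f i).IsMatching)
    (hd : ∀ i ∈ s, ∀ j ∈ s, i ≠ j → Disjoint ((f i).verts) ((f j).verts)) :
    (s.sup f).IsMatching ∧ (s.sup f).verts = ⋃ i ∈ s, (f i).verts := by
  classical
  induction s using Finset.cons_induction with
  | empty =>
      constructor
      · intro v hv; simp [Subgraph.verts_bot] at hv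
      · simp
  | cons a s ha ih =>
      obtain ⟨ihm, ihv⟩ := ih (fun i hi => hm i (Finset.mem_cons_of_mem hi))
        (fun i hi j hj hij => hd i (Finset.mem_cons_of_mem hi) j (Finset.mem_cons_of_mem hj) hij)
      have hdisj : Disjoint ((f a).verts) ((s.sup f).verts) := by
        rw [ihv]
        rw [Set.disjoint_iff_inter_eq_empty]
        ext x
        simp only [Set.mem_inter_iff, Set.mem_iUnion, Set.mem_empty_iff_false, iff_false, not_and,
          not_exists]
        rintro hx i hi hxi
        exact Set.disjoint_left.mp
          (hd a (Finset.mem_cons_self a s) i (Finset.mem_cons_of_mem hi)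
            (fun h => ha (h ▸ hi))) hx hxi
      have hma := hm a (Finset.mem_cons_self a s)
      constructor
      · rw [Finset.sup_cons]
        exact hma.sup ihm (by
          refine Set.disjoint_of_subset ?_ ?_ hdisj
          · exact (f a).support_subset_verts
          · exact (s.sup f).support_subset_verts)
      · rw [Finset.sup_cons, Subgraph.verts_sup, ihv]
        ext x
        simp only [Set.mem_union, Set.mem_iUnion, Finset.mem_cons]
        constructor
        · rintro (h | ⟨i, hi, h⟩)
          · exact ⟨a, Or.inl rfl, h⟩
          · exact ⟨i, Or.inr hi, h⟩
        · rintro ⟨i, (rfl | hi), h⟩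
          · exact Or.inl h
          · exact Or.inr ⟨i, hi, h⟩


variable {N : ℕ} {T : SimpleGraph (Fin N)} {S : Finset (Fin N)} {u v w : Fin N}

lemma mem_comp :
    u ∈ comp T S v ↔ u ∈ S ∧ ∃ p : T.Walk v u, ∀ x ∈ p.support, x ∈ S :=
  Finset.mem_filter

lemma comp_subset : comp T S v ⊆ S := Finset.filter_subset _ _

lemma self_mem_comp (hv : v ∈ S) : v ∈ comp T S v := by
  rw [mem_comp]
  exact ⟨hv, SimpleGraph.Walk.nil, by simpa using hv⟩

lemma comp_reach (hu : u ∈ comp T S v) :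
    ∃ p : T.Walk v u, ∀ x ∈ p.support, x ∈ comp T S v := by
  obtain ⟨huS, p, hp⟩ := mem_comp.mp hu
  refine ⟨p, fun x hx => ?_⟩
  rw [mem_comp]
  exact ⟨hp x hx, p.takeUntil x hx,
    fun y hy => hp y (p.support_takeUntil_subset hx hy)⟩

lemma coverage (hu : u ∈ S.erase w)
    (hreach : ∀ x ∈ S, ∃ p : T.Walk w x, ∀ y ∈ p.support, y ∈ S) :
    ∃ v ∈ S.erase w, T.Adj w v ∧ u ∈ comp T (S.erase w) v := by
  obtain ⟨hune, huS⟩ := Finset.mem_erase.mp hu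
  obtain ⟨p0, hp0⟩ := hreach u huS
  have hsupp : ∀ y ∈ (p0.toPath : T.Walk w u).support, y ∈ S :=
    fun y hy => hp0 y (p0.support_toPath_subset hy)
  have hpath : (p0.toPath : T.Walk w u).IsPath := p0.toPath.2
  cases hp : (p0.toPath : T.Walk w u) with
  | nil => exact absurd rfl hune
  | @cons _ v _ hadj q =>
      rw [hp] at hsupp hpath
      rw [SimpleGraph.Walk.cons_isPath_iff] at hpath
      have hqS : ∀ y ∈ q.support, y ∈ S.erase w := fun y hy =>
        Finset.mem_erase.mpr ⟨fun h => hpath.2 (h ▸ hy),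
          hsupp y (by simp [SimpleGraph.Walk.support_cons, hy])⟩
      have hvS : v ∈ S.erase w := hqS v q.start_mem_support
      exact ⟨v, hvS, hadj, mem_comp.mpr ⟨Finset.mem_erase.mpr ⟨hune, huS⟩, q, hqS⟩⟩

lemma comp_disjoint (hac : T.IsAcyclic) {v v' : Fin N}
    (hav : T.Adj w v) (hav' : T.Adj w v') (hne : v ≠ v') :
    Disjoint (comp T (S.erase w) v) (comp T (S.erase w) v') := by
  rw [Finset.disjoint_left]
  intro u huv huv'
  obtain ⟨huS, p, hp⟩ := mem_comp.mp huv
  obtain ⟨_, p', hp'⟩ := mem_comp.mp huv'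
  have hqw : w ∉ (p.toPath : T.Walk v u).support := fun h =>
    (Finset.mem_erase.mp (hp w (p.support_toPath_subset h))).1 rfl
  have hqw' : w ∉ (p'.toPath : T.Walk v' u).support := fun h =>
    (Finset.mem_erase.mp (hp' w (p'.support_toPath_subset h))).1 rfl
  let P : T.Path w u := ⟨.cons hav p.toPath,
    (SimpleGraph.Walk.cons_isPath_iff _ _).mpr ⟨p.toPath.2, hqw⟩⟩
  let P' : T.Path w u := ⟨.cons hav' p'.toPath,
    (SimpleGraph.Walk.cons_isPath_iff _ _).mpr ⟨p'.toPath.2, hqw'⟩⟩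
  have hPP : P = P' := SimpleGraph.isAcyclic_iff_path_unique.mp hac P P'
  have hsup : (P : T.Walk w u).support = (P' : T.Walk w u).support := by rw [hPP]
  simp only [P, P', SimpleGraph.Walk.support_cons] at hsup
  have h1 := (p.toPath : T.Walk v u).support_eq_cons
  have h2 := (p'.toPath : T.Walk v' u).support_eq_cons
  rw [h1, h2] at hsup
  exact hne (List.head_eq_of_cons_eq (List.tail_eq_of_cons_eq hsup))

lemma neb_main (hac : T.IsAcyclic) :
    ∀ (k : ℕ) (S : Finset (Fin N)) (w : Fin N), w ∈ S →
    (∀ u ∈ S, ∃ p : T.Walk w u, ∀ x ∈ p.support, x ∈ S) →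
    NEBAux T k S w →
    ∃ M : T.Subgraph, M.IsMatching ∧
      M.verts = (if Even S.card then (↑S : Set (Fin N)) else ↑(S.erase w)) := by
  intro k
  induction k with
  | zero =>
      intro S w hw hreach h
      rw [NEBAux] at h
      subst h
      refine ⟨⊥, fun x hx => absurd hx (by simp), ?_⟩
      simp
  | succ k ih =>
      intro S w hw hreach h
      rw [NEBAux] at h
      rcases h with h | ⟨hcount, hrec⟩
      · subst h
        refine ⟨⊥, fun x hx => absurd hx (by simp), ?_⟩
        simp
      set Nb := (S.erase w).filter (fun v => T.Adj w v) with hNb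
      have hNbmem : ∀ v, v ∈ Nb ↔ v ∈ S.erase w ∧ T.Adj w v := by
        intro v; rw [hNb, Finset.mem_filter]
      -- recursive matchings
      have hex : ∀ v ∈ Nb, ∃ M : T.Subgraph, M.IsMatching ∧
          M.verts = (if Even (comp T (S.erase w) v).card
            then (↑(comp T (S.erase w) v) : Set (Fin N))
            else ↑((comp T (S.erase w) v).erase v)) := by
        intro v hv
        obtain ⟨hvS, hadj⟩ := (hNbmem v).mp hv
        exact ih (comp T (S.erase w) v) v (self_mem_comp hvS)
          (fun u hu => comp_reach hu) (hrec v hvS hadj)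
      set f : Fin N → T.Subgraph :=
        fun v => if h : v ∈ Nb then (hex v h).choose else ⊥ with hf
      have hfm : ∀ v ∈ Nb, (f v).IsMatching := by
        intro v hv; rw [hf]; simp only [dif_pos hv]; exact (hex v hv).choose_spec.1
      have hfv : ∀ v ∈ Nb, (f v).verts =
          (if Even (comp T (S.erase w) v).card
            then (↑(comp T (S.erase w) v) : Set (Fin N))
            else ↑((comp T (S.erase w) v).erase v)) := by
        intro v hv; rw [hf]; simp only [dif_pos hv]; exact (hex v hv).choose_spec.2
      have hfsub : ∀ v ∈ Nb, (f v).verts ⊆ ↑(comp T (S.erase w) v) := by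
        intro v hv
        rw [hfv v hv]
        split
        · exact subset_rfl
        · exact fun x hx => by
            simp only [Finset.coe_erase, Set.mem_diff] at hx
            exact hx.1
      have hdisj : ∀ i ∈ Nb, ∀ j ∈ Nb, i ≠ j → Disjoint ((f i).verts) ((f j).verts) := by
        intro i hi j hj hij
        have := comp_disjoint (S := S) (w := w) hac ((hNbmem i).mp hi).2 ((hNbmem j).mp hj).2 hij
        refine Set.disjoint_of_subset (hfsub i hi) (hfsub j hj) ?_
        exact_mod_cast Finset.disjoint_coe.mpr this
      obtain ⟨hMm, hMv⟩ := sup_matching Nb f hfm hdisj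
      by_cases hpar : Even S.card
      · -- even case: one odd component v₀
        rw [if_pos hpar] at hcount
        obtain ⟨v₀, hv₀⟩ := Finset.card_eq_one.mp hcount
        have hv₀mem : v₀ ∈ (S.erase w).filter
            (fun v => T.Adj w v ∧ Odd (comp T (S.erase w) v).card) := by
          rw [hv₀]; exact Finset.mem_singleton_self v₀
        rw [Finset.mem_filter] at hv₀mem
        have hv₀S := hv₀mem.1
        have hv₀adj := hv₀mem.2.1
        have hv₀odd := hv₀mem.2.2
        have hv₀Nb : v₀ ∈ Nb := (hNbmem v₀).mpr ⟨hv₀S, hv₀adj⟩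
        have hother : ∀ v ∈ Nb, v ≠ v₀ → Even (comp T (S.erase w) v).card := by
          intro v hv hne
          by_contra hodd
          have : v ∈ ({v₀} : Finset (Fin N)) := by
            rw [← hv₀, Finset.mem_filter]
            exact ⟨((hNbmem v).mp hv).1, ((hNbmem v).mp hv).2, Nat.not_even_iff_odd.mp hodd⟩
          exact hne (Finset.mem_singleton.mp this)
        -- final matching
        have hedge : (T.subgraphOfAdj hv₀adj).IsMatching :=
          SimpleGraph.Subgraph.IsMatching.subgraphOfAdj hv₀adj
        have hwne : w ∉ (Nb.sup f).verts := by
          rw [hMv]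
          simp only [Set.mem_iUnion, not_exists]
          intro v hv hwv
          have := comp_subset (hfsub v hv hwv)
          exact absurd this (by simp)
        have hv₀ne : v₀ ∉ (Nb.sup f).verts := by
          rw [hMv]
          simp only [Set.mem_iUnion, not_exists]
          intro v hv hv₀v
          by_cases hvv : v = v₀
          · subst hvv
            rw [hfv v hv, if_neg (Nat.not_even_iff_odd.mpr hv₀odd)] at hv₀v
            simp at hv₀v
          · exact Finset.disjoint_left.mp
              (comp_disjoint (S := S) (w := w) hac ((hNbmem v).mp hv).2 hv₀adj hvv)
              (by exact_mod_cast hfsub v hv hv₀v) (self_mem_comp hv₀S)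
        have hdisj2 : Disjoint (Nb.sup f).support (T.subgraphOfAdj hv₀adj).support := by
          refine Set.disjoint_of_subset (SimpleGraph.Subgraph.support_subset_verts _)
            (SimpleGraph.Subgraph.support_subset_verts _) ?_
          rw [Set.disjoint_right]
          intro x hx
          simp only [SimpleGraph.subgraphOfAdj_verts, Set.mem_insert_iff,
            Set.mem_singleton_iff] at hx
          rcases hx with rfl | rfl
          · exact hwne
          · exact hv₀ne
        refine ⟨Nb.sup f ⊔ T.subgraphOfAdj hv₀adj, hMm.sup hedge hdisj2, ?_⟩
        rw [if_pos hpar, SimpleGraph.Subgraph.verts_sup, hMv]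
        ext x
        simp only [Set.mem_union, Set.mem_iUnion, SimpleGraph.subgraphOfAdj_verts,
          Set.mem_insert_iff, Set.mem_singleton_iff, Finset.mem_coe]
        constructor
        · rintro (⟨i, hi, hx⟩ | rfl | rfl)
          · exact Finset.mem_of_mem_erase (comp_subset (hfsub i hi hx))
          · exact hw
          · exact Finset.mem_of_mem_erase hv₀S
        · intro hxS
          by_cases hxw : x = w
          · exact Or.inr (Or.inl hxw)
          · obtain ⟨v, hvS, hadj, hxv⟩ :=
              coverage (Finset.mem_erase.mpr ⟨hxw, hxS⟩) hreach
            have hvNb : v ∈ Nb := (hNbmem v).mpr ⟨hvS, hadj⟩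
            by_cases hvv : v = v₀
            · subst hvv
              by_cases hxv₀ : x = v
              · exact Or.inr (Or.inr hxv₀)
              · refine Or.inl ⟨v, hvNb, ?_⟩
                rw [hfv v hvNb, if_neg (Nat.not_even_iff_odd.mpr hv₀odd)]
                exact_mod_cast Finset.mem_erase.mpr ⟨hxv₀, hxv⟩
            · refine Or.inl ⟨v, hvNb, ?_⟩
              rw [hfv v hvNb, if_pos (hother v hvNb hvv)]
              exact_mod_cast hxv
      · -- odd case: all components even
        rw [if_neg hpar] at hcount
        have hall : ∀ v ∈ Nb, Even (comp T (S.erase w) v).card := by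
          intro v hv
          by_contra hodd
          have : v ∈ (S.erase w).filter
              (fun v => T.Adj w v ∧ Odd (comp T (S.erase w) v).card) := by
            rw [Finset.mem_filter]
            exact ⟨((hNbmem v).mp hv).1, ((hNbmem v).mp hv).2, Nat.not_even_iff_odd.mp hodd⟩
          rw [Finset.card_eq_zero.mp hcount] at this
          simp at this
        refine ⟨Nb.sup f, hMm, ?_⟩
        rw [if_neg hpar, hMv]
        ext x
        simp only [Set.mem_iUnion, Finset.mem_coe]
        constructor
        · rintro ⟨i, hi, hx⟩
          exact comp_subset (hfsub i hi hx)
        · intro hx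
          obtain ⟨v, hvS, hadj, hxv⟩ := coverage hx hreach
          have hvNb : v ∈ Nb := (hNbmem v).mpr ⟨hvS, hadj⟩
          refine ⟨v, hvNb, ?_⟩
          rw [hfv v hvNb, if_pos (hall v hvNb)]
          exact_mod_cast hxv
end AuxProofs

/-- If a tree `T` of order `n` is NEB at some vertex, then its matching number
is `⌊n/2⌋`. -/
theorem stmt_16 {N : ℕ} (T : SimpleGraph (Fin N)) (hT : T.IsTree) (w : Fin N)
    (h : NEB T w) :
    matchingNumber T = N / 2 := by
  have hac := hT.IsAcyclic
  have hconn := hT.isConnected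
  have hreach : ∀ u ∈ (Finset.univ : Finset (Fin N)),
      ∃ p : T.Walk w u, ∀ x ∈ p.support, x ∈ (Finset.univ : Finset (Fin N)) := by
    intro u _
    obtain ⟨p⟩ := hconn.preconnected w u
    exact ⟨p, fun x _ => Finset.mem_univ x⟩
  obtain ⟨M, hMm, hMv⟩ := neb_main hac N Finset.univ w (Finset.mem_univ w) hreach h
  have hcard : (Finset.univ : Finset (Fin N)).card = N := by simp
  have hub : ∀ k ∈ {k | ∃ M : T.Subgraph, M.IsMatching ∧ M.verts.ncard = 2 * k},
      k ≤ N / 2 := by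
    rintro k ⟨M', _, hc⟩
    have h1 : M'.verts.ncard ≤ N := by
      have := Set.ncard_le_ncard (Set.subset_univ M'.verts) Set.finite_univ
      simpa [Set.ncard_univ] using this
    omega
  have hmem : N / 2 ∈ {k | ∃ M : T.Subgraph, M.IsMatching ∧ M.verts.ncard = 2 * k} := by
    refine ⟨M, hMm, ?_⟩
    by_cases hpar : Even N
    · rw [hMv, if_pos (by rwa [hcard]), Set.ncard_coe_finset, hcard]
      obtain ⟨m, hm⟩ := hpar
      omega
    · rw [hMv, if_neg (by rwa [hcard]), Set.ncard_coe_finset,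
        Finset.card_erase_of_mem (Finset.mem_univ w), hcard]
      rw [Nat.not_even_iff] at hpar
      omega
  unfold matchingNumber
  exact le_antisymm (csSup_le ⟨N / 2, hmem⟩ hub) (le_csSup ⟨N / 2, hub⟩ hmem)
end
end

section
/- Let A be an n×n real skew-symmetric matrix with n distinct eigenvalues, let B = A(n) (the principal submatrix deleting the last row and column), and suppose A and B have no common eigenvalue. Let p, q be odd real polynomials of degree at most n-1 and n-2 respectively such that p(A) + q̃(B) has zero entries in every position (i,j) where A has a nonzero entry or where i = j. If moreover p(A) + q̃(B) = 0, then p and q are the zero polynomials. Here q̃(B) denotes q(B) padded with a final zero row and zero column to size n×n. -/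
open Polynomial Matrix

/-- `W` padded with a final zero row and zero column. -/
def pad {n : ℕ} (W : Matrix (Fin n) (Fin n) ℝ) : Matrix (Fin (n + 1)) (Fin (n + 1)) ℝ :=
  fun i j =>
    if h1 : (i : ℕ) < n then if h2 : (j : ℕ) < n then W ⟨i, h1⟩ ⟨j, h2⟩ else 0 else 0

/-!
Let `B` be `A` without its last row and column, and `r` the last row of `A` without its last
entry. An eigenvector of `A` with last entry `0` restricts to an eigenvector of `B`, and an
eigenvector `u` of `B` with `r ⬝ᵥ u = 0` extends by a zero to an eigenvector of `A`, for the same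
eigenvalue. As `A` and `B` share no eigenvalue, neither can happen.

Since `p(A) = -q̃(B)` has zero last row, applying it to an eigenvector `v` of `A` for `λ` gives
`p(λ) v_last = 0` with `v_last ≠ 0`; so `p` vanishes at all eigenvalues of `A`, which are more
than its degree, and `p = 0`. Then `q(B) = 0`. Two eigenvectors `u₁, u₂` of `B` for the same
eigenvalue are proportional, as `(r ⬝ᵥ u₁) u₂ - (r ⬝ᵥ u₂) u₁` would otherwise extend. The
skew-Hermitian `B` has an orthonormal eigenbasis, whose eigenvalues are therefore distinct, and
`q` vanishes at all of them, which are more than its degree.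
-/

namespace Matrix

section Eigenvectors

variable {K : Type*} [Field K] {ι : Type*} [Fintype ι] [DecidableEq ι]

theorem isRoot_charpoly_iff_exists_mulVec_eq_smul (M : Matrix ι ι K) (μ : K) :
    M.charpoly.IsRoot μ ↔ ∃ v ≠ 0, M *ᵥ v = μ • v := by
  rw [← charpoly_toLin', ← Module.End.hasEigenvalue_iff_isRoot_charpoly]
  constructor
  · intro h
    obtain ⟨v, hv⟩ := h.exists_hasEigenvector
    exact ⟨v, hv.2, by simpa using hv.apply_eq_smul⟩
  · rintro ⟨v, hv, h⟩
    exact Module.End.hasEigenvalue_of_hasEigenvector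
      ⟨Module.End.mem_eigenspace_iff.mpr (by simpa using h), hv⟩

theorem aeval_mulVec_of_mulVec_eq_smul {M : Matrix ι ι K} {μ : K} {v : ι → K}
    (h : M *ᵥ v = μ • v) (p : K[X]) : aeval M p *ᵥ v = p.eval μ • v := by
  have := Module.End.aeval_apply_of_mem_apply_eq_smul (f := toLinAlgEquiv' M) (p := p)
    (by simpa using h)
  rwa [aeval_algHom_apply, toLinAlgEquiv'_apply] at this

def NoCommonEigenvalue {κ : Type*} [Fintype κ] [DecidableEq κ] (M : Matrix ι ι K)
    (N : Matrix κ κ K) : Prop :=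
  ∀ z : K, ¬ (M.charpoly.IsRoot z ∧ N.charpoly.IsRoot z)

end Eigenvectors

theorem aeval_map_algebraMap_eq_map {R S : Type*} [CommSemiring R] [CommSemiring S]
    [Algebra R S] {ι : Type*} [Fintype ι] [DecidableEq ι] (M : Matrix ι ι R) (p : R[X]) :
    aeval (M.map (algebraMap R S)) (p.map (algebraMap R S)) = (aeval M p).map (algebraMap R S) := by
  rw [Polynomial.aeval_map_algebraMap]
  exact aeval_algHom_apply (Algebra.ofId R S).mapMatrix M p

section LastRowAndColumn

variable {K : Type*} [Field K] {m : ℕ} {A : Matrix (Fin (m + 1)) (Fin (m + 1)) K}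

theorem mulVec_snoc_zero (A : Matrix (Fin (m + 1)) (Fin (m + 1)) K) (u : Fin m → K) :
    A *ᵥ Fin.snoc u 0 = Fin.snoc (A.submatrix Fin.castSucc Fin.castSucc *ᵥ u)
      ((fun j ↦ A (Fin.last m) j.castSucc) ⬝ᵥ u) := by
  ext i
  induction i using Fin.lastCases <;> simp [mulVec, dotProduct, Fin.sum_univ_castSucc]

theorem last_ne_zero_of_mulVec_eq_smul
    (hA : NoCommonEigenvalue A (A.submatrix Fin.castSucc Fin.castSucc)) {μ : K}
    {v : Fin (m + 1) → K} (hv : v ≠ 0) (h : A *ᵥ v = μ • v) : v (Fin.last m) ≠ 0 := by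
  intro hlast
  obtain ⟨u, rfl⟩ : ∃ u, Fin.snoc u 0 = v := ⟨Fin.init v, by rw [← hlast, Fin.snoc_init_self]⟩
  rw [mulVec_snoc_zero] at h
  refine hA μ ⟨(isRoot_charpoly_iff_exists_mulVec_eq_smul A μ).2 ⟨_, hv, by rw [mulVec_snoc_zero, h]⟩,
    (isRoot_charpoly_iff_exists_mulVec_eq_smul _ μ).2 ⟨u, ?_, ?_⟩⟩
  · rintro rfl
    exact hv (by ext i; induction i using Fin.lastCases <;> simp)
  · ext i
    simpa using congrFun h i.castSucc

theorem isRoot_charpoly_of_dotProduct_eq_zero {μ : K} {u : Fin m → K} (hu : u ≠ 0)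
    (h : A.submatrix Fin.castSucc Fin.castSucc *ᵥ u = μ • u)
    (horth : (fun j ↦ A (Fin.last m) j.castSucc) ⬝ᵥ u = 0) : A.charpoly.IsRoot μ := by
  refine (isRoot_charpoly_iff_exists_mulVec_eq_smul A μ).2 ⟨Fin.snoc u 0, ?_, ?_⟩
  · intro h0
    exact hu (funext fun i ↦ by simpa using congrFun h0 i.castSucc)
  · rw [mulVec_snoc_zero, h, horth]
    ext i
    induction i using Fin.lastCases <;> simp

theorem exists_smul_eq_of_mulVec_eq_smul
    (hA : NoCommonEigenvalue A (A.submatrix Fin.castSucc Fin.castSucc)) {μ : K}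
    {u₁ u₂ : Fin m → K} (hu₁ : u₁ ≠ 0) (h₁ : A.submatrix Fin.castSucc Fin.castSucc *ᵥ u₁ = μ • u₁)
    (h₂ : A.submatrix Fin.castSucc Fin.castSucc *ᵥ u₂ = μ • u₂) : ∃ a : K, a • u₁ = u₂ := by
  set r : Fin m → K := fun j ↦ A (Fin.last m) j.castSucc
  have hB : (A.submatrix Fin.castSucc Fin.castSucc).charpoly.IsRoot μ :=
    (isRoot_charpoly_iff_exists_mulVec_eq_smul _ μ).2 ⟨u₁, hu₁, h₁⟩
  have hr₁ : r ⬝ᵥ u₁ ≠ 0 := fun h ↦ hA μ ⟨isRoot_charpoly_of_dotProduct_eq_zero hu₁ h₁ h, hB⟩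
  have hdep : (r ⬝ᵥ u₁) • u₂ = (r ⬝ᵥ u₂) • u₁ := by
    by_contra hne
    refine hA μ ⟨isRoot_charpoly_of_dotProduct_eq_zero (sub_ne_zero.2 hne) ?_ ?_, hB⟩
    · rw [mulVec_sub, mulVec_smul, mulVec_smul, h₁, h₂, smul_sub, smul_comm μ, smul_comm μ]
    · rw [dotProduct_sub, dotProduct_smul, dotProduct_smul, smul_eq_mul, smul_eq_mul, mul_comm,
        sub_self]
  exact ⟨(r ⬝ᵥ u₁)⁻¹ * (r ⬝ᵥ u₂), by rw [mul_smul, ← hdep, smul_smul, inv_mul_cancel₀ hr₁, one_smul]⟩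

theorem eval_eq_zero_of_aeval_last_row_eq_zero
    (hA : NoCommonEigenvalue A (A.submatrix Fin.castSucc Fin.castSucc)) {p : K[X]}
    (hp : ∀ j, aeval A p (Fin.last m) j = 0) {μ : K} (hμ : A.charpoly.IsRoot μ) :
    p.eval μ = 0 := by
  obtain ⟨v, hv, h⟩ := (isRoot_charpoly_iff_exists_mulVec_eq_smul A μ).1 hμ
  have := congrFun (aeval_mulVec_of_mulVec_eq_smul h p) (Fin.last m)
  simp only [mulVec, dotProduct, hp, zero_mul, Finset.sum_const_zero, Pi.smul_apply, smul_eq_mul]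
    at this
  exact (mul_eq_zero.1 this.symm).resolve_right (last_ne_zero_of_mulVec_eq_smul hA hv h)

theorem eq_zero_of_aeval_last_row_eq_zero
    (hA : NoCommonEigenvalue A (A.submatrix Fin.castSucc Fin.castSucc)) {l : Fin (m + 1) → K}
    (hl : Function.Injective l) (hroot : ∀ j, A.charpoly.IsRoot (l j)) {p : K[X]}
    (hdeg : p.natDegree ≤ m) (hp : ∀ j, aeval A p (Fin.last m) j = 0) : p = 0 :=
  eq_zero_of_natDegree_lt_card_of_eval_eq_zero p hl
    (fun j ↦ eval_eq_zero_of_aeval_last_row_eq_zero hA hp (hroot j)) (by simpa using hdeg)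

end LastRowAndColumn

theorem exists_orthonormalBasis_mulVec_eq_smul_of_conjTranspose_eq_neg {ι : Type*} [Fintype ι]
    [DecidableEq ι] {B : Matrix ι ι ℂ} (hB : Bᴴ = -B) :
    ∃ (w : OrthonormalBasis ι ℂ (EuclideanSpace ℂ ι)) (ν : ι → ℂ),
      ∀ k, B *ᵥ ⇑(w k) = ν k • ⇑(w k) := by
  have hH : (Complex.I • B).IsHermitian := by
    rw [IsHermitian, conjTranspose_smul, hB, Complex.star_def, Complex.conj_I, neg_smul, smul_neg,
      neg_neg]
  refine ⟨hH.eigenvectorBasis, fun k ↦ -Complex.I * hH.eigenvalues k, fun k ↦ ?_⟩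
  have := congrArg (fun v ↦ -Complex.I • v) (hH.mulVec_eigenvectorBasis k)
  simp only [smul_mulVec, smul_smul, neg_mul, Complex.I_mul_I, neg_neg, one_smul] at this
  rw [this, ← smul_smul, Complex.coe_smul]

theorem eq_zero_of_aeval_submatrix_eq_zero {m : ℕ} {A : Matrix (Fin (m + 1)) (Fin (m + 1)) ℂ}
    (hA : NoCommonEigenvalue A (A.submatrix Fin.castSucc Fin.castSucc)) (hskew : Aᴴ = -A)
    {q : ℂ[X]} (hdeg : q.natDegree < m)
    (hq : aeval (A.submatrix Fin.castSucc Fin.castSucc) q = 0) : q = 0 := by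
  obtain ⟨w, ν, hw⟩ := exists_orthonormalBasis_mulVec_eq_smul_of_conjTranspose_eq_neg
    (B := A.submatrix Fin.castSucc Fin.castSucc) (by rw [conjTranspose_submatrix, hskew]; rfl)
  have hw0 (k : Fin m) : ⇑(w k) ≠ 0 := by simpa using w.orthonormal.ne_zero k
  have hν : Function.Injective ν := by
    intro j k hjk
    by_contra hne
    obtain ⟨a, ha⟩ := exists_smul_eq_of_mulVec_eq_smul hA (hw0 j) (hw j) (hjk ▸ hw k)
    have hinner := congrArg (inner ℂ (w j)) (WithLp.ofLp_injective 2 ha : a • w j = w k)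
    rw [inner_smul_right, orthonormal_iff_ite.1 w.orthonormal, orthonormal_iff_ite.1 w.orthonormal,
      if_pos rfl, if_neg hne, mul_one] at hinner
    exact hw0 k (by rw [← ha, hinner, zero_smul])
  refine eq_zero_of_natDegree_lt_card_of_eval_eq_zero q hν (fun k ↦ ?_) (by simpa using hdeg)
  have := aeval_mulVec_of_mulVec_eq_smul (hw k) q
  rw [hq, zero_mulVec] at this
  exact (smul_eq_zero.1 this.symm).resolve_right (hw0 k)

end Matrix

theorem eq_zero_of_pad_eq_zero {n : ℕ} {W : Matrix (Fin n) (Fin n) ℝ} (h : pad W = 0) : W = 0 := by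
  ext i j
  simpa [pad] using congrFun₂ h i.castSucc j.castSucc

theorem stmt_19_general {n : ℕ} (A : Matrix (Fin (n + 1)) (Fin (n + 1)) ℝ) (hskew : Aᵀ = -A)
    (l : Fin (n + 1) → ℂ) (hl : Function.Injective l)
    (hspecA : (A.map (Complex.ofReal : ℝ → ℂ)).charpoly = ∏ j, (X - C (l j)))
    (B : Matrix (Fin n) (Fin n) ℝ)
    (hB : B = A.submatrix Fin.castSucc Fin.castSucc)
    (hdisj : ∀ z : ℂ, ¬ (((A.map (Complex.ofReal : ℝ → ℂ)).charpoly).IsRoot z ∧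
        ((B.map (Complex.ofReal : ℝ → ℂ)).charpoly).IsRoot z))
    (p q : Polynomial ℝ)
    (hqodd : ∀ k, Even k → q.coeff k = 0)
    (hpdeg : p.natDegree ≤ n) (hqdeg : q.natDegree ≤ n - 1)
    (hsum : Polynomial.aeval A p + pad (Polynomial.aeval B q) = 0) :
    p = 0 ∧ q = 0 := by
  subst hB
  rw [← Complex.coe_algebraMap] at hspecA hdisj
  have hA : NoCommonEigenvalue (A.map (algebraMap ℝ ℂ))
      ((A.map (algebraMap ℝ ℂ)).submatrix Fin.castSucc Fin.castSucc) := hdisj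
  have hp : p = 0 := by
    rw [← Polynomial.map_eq_zero_iff (algebraMap ℝ ℂ).injective]
    refine eq_zero_of_aeval_last_row_eq_zero hA hl (fun j ↦ ?_) (natDegree_map_le.trans hpdeg)
      fun j ↦ ?_
    · rw [hspecA, isRoot_prod]
      exact ⟨j, Finset.mem_univ j, by simp⟩
    · rw [aeval_map_algebraMap_eq_map, eq_neg_of_add_eq_zero_left hsum]
      simp [pad]
  refine ⟨hp, ?_⟩
  have hqB : aeval (A.submatrix Fin.castSucc Fin.castSucc) q = 0 :=
    eq_zero_of_pad_eq_zero (by simpa [hp] using hsum)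
  rcases eq_or_ne q 0 with hq | hq
  · exact hq
  -- For `n = 0` the bound `n - 1` truncates to `0`; oddness rules out a nonzero constant `q`.
  have hq0 : q.natDegree ≠ 0 := fun h ↦
    hq (by rw [eq_C_of_natDegree_eq_zero h, hqodd 0 Even.zero, C_0])
  rw [← Polynomial.map_eq_zero_iff (algebraMap ℝ ℂ).injective]
  refine eq_zero_of_aeval_submatrix_eq_zero hA ?_ (natDegree_map_le.trans_lt (by omega)) ?_
  · rw [← conjTranspose_map _ (fun x ↦ by simp), conjTranspose_eq_transpose_of_trivial, hskew,
      Matrix.map_neg _ (map_neg _)]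
  · rw [submatrix_map, aeval_map_algebraMap_eq_map, hqB, Matrix.map_zero _ (map_zero _)]

/-- Let `A` be real skew-symmetric with distinct eigenvalues, `B = A(n)` the
principal submatrix deleting the last row and column, with `A` and `B` having
no common eigenvalue.  If `p`, `q` are odd polynomials of degree at most
`n-1`, `n-2` respectively, `p(A) + q̃(B)` vanishes at every position where `A`
is nonzero or on the diagonal, and moreover `p(A) + q̃(B) = 0`, then `p = 0`
and `q = 0`. -/
theorem stmt_19 {n : ℕ} (A : Matrix (Fin (n + 1)) (Fin (n + 1)) ℝ) (hskew : Aᵀ = -A)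
    (l : Fin (n + 1) → ℂ) (hl : Function.Injective l)
    (hspecA : (A.map (Complex.ofReal : ℝ → ℂ)).charpoly = ∏ j, (X - C (l j)))
    (B : Matrix (Fin n) (Fin n) ℝ)
    (hB : B = A.submatrix Fin.castSucc Fin.castSucc)
    (hdisj : ∀ z : ℂ, ¬ (((A.map (Complex.ofReal : ℝ → ℂ)).charpoly).IsRoot z ∧
        ((B.map (Complex.ofReal : ℝ → ℂ)).charpoly).IsRoot z))
    (p q : Polynomial ℝ)
    (hpodd : ∀ k, Even k → p.coeff k = 0) (hqodd : ∀ k, Even k → q.coeff k = 0)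
    (hpdeg : p.natDegree ≤ n) (hqdeg : q.natDegree ≤ n - 1)
    (hzero : ∀ i j : Fin (n + 1), (A i j ≠ 0 ∨ i = j) →
        (Polynomial.aeval A p + pad (Polynomial.aeval B q)) i j = 0)
    (hsum : Polynomial.aeval A p + pad (Polynomial.aeval B q) = 0) :
    p = 0 ∧ q = 0 :=
  stmt_19_general A hskew l hl hspecA B hB hdisj p q hqodd hpdeg hqdeg hsum
end
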